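/- Let (X₁, X₂) be a pair of non-identically distributed log-normal random variables with X_i ~ LN(μ_i, σ_i²), i = 1, 2, and let φ⁻(u) = F_{X₁}^{-1}(u) + F_{X₂}^{-1}(1 − u), u ∈ (0,1), be the aggregate loss function. Set u₀ = Φ((μ₂ − μ₁ + ln(σ₂/σ₁))/(σ₁ + σ₂)) ∈ (0,1). Then φ⁻ is strictly decreasing on (0, u₀), strictly increasing on (u₀, 1), and attains its minimal value at u₀. -/

import Mathlib

open MeasureTheory ProbabilityTheory Set

noncomputable section

variable {Ω : Type*} [MeasurableSpace Ω]

/-- The cumulative distribution function of the random variable `X` under `P`. -/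
def rvCdf (P : Measure Ω) (X : Ω → ℝ) : ℝ → ℝ := fun x => (P {ω | X ω ≤ x}).toReal

/-- The survival function `x ↦ P(X > x)`. -/
def rvSurv (P : Measure Ω) (X : Ω → ℝ) : ℝ → ℝ := fun x => (P {ω | x < X ω}).toReal

/-- The left inverse `F⁻¹(p) = inf {x | F x ≥ p}` of a cdf `F`. -/
def leftInv (F : ℝ → ℝ) (p : ℝ) : ℝ := sInf {x | p ≤ F x}

/-- The right inverse `F⁻¹⁺(p) = sup {x | F x ≤ p}` of a cdf `F`. -/
def rightInv (F : ℝ → ℝ) (p : ℝ) : ℝ := sSup {x | F x ≤ p}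

/-- `g : [0,1] → [0,1]` is a distortion function: nondecreasing with `g 0 = 0`, `g 1 = 1`. -/
def IsDistortion (g : ℝ → ℝ) : Prop :=
  MonotoneOn g (Icc 0 1) ∧ g 0 = 0 ∧ g 1 = 1 ∧ ∀ q ∈ Icc (0:ℝ) 1, g q ∈ Icc (0:ℝ) 1

/-- The dual distortion function `ḡ(q) = 1 - g(1 - q)`. -/
def dualDistortion (g : ℝ → ℝ) : ℝ → ℝ := fun q => 1 - g (1 - q)

/-- The distortion risk measure
`ρ_g[X] = -∫_{-∞}^0 (1 - g(P(X > x))) dx + ∫_0^∞ g(P(X > x)) dx`. -/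
def rho (P : Measure Ω) (g : ℝ → ℝ) (X : Ω → ℝ) : ℝ :=
  (- ∫ x in Iio (0:ℝ), (1 - g (rvSurv P X x))) + ∫ x in Ioi (0:ℝ), g (rvSurv P X x)

/-- The two integrals defining the distortion risk measure `ρ_g[X]` are finite. -/
def RhoFinite (P : Measure Ω) (g : ℝ → ℝ) (X : Ω → ℝ) : Prop :=
  IntegrableOn (fun x => 1 - g (rvSurv P X x)) (Iio (0:ℝ)) volume ∧
  IntegrableOn (fun x => g (rvSurv P X x)) (Ioi (0:ℝ)) volume

/-- `U` is uniformly distributed on `[0,1]`. -/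
def IsUniform01 (P : Measure Ω) (U : Ω → ℝ) : Prop :=
  Measurable U ∧ Measure.map U P = volume.restrict (Icc (0:ℝ) 1)

/-- The counter-monotonic sum `S⁻ = F_{X₁}⁻¹(U) + F_{X₂}⁻¹(1 - U)`. -/
def cmSum (P : Measure Ω) (X₁ X₂ : Ω → ℝ) (U : Ω → ℝ) : Ω → ℝ :=
  fun ω => leftInv (rvCdf P X₁) (U ω) + leftInv (rvCdf P X₂) (1 - U ω)

/-- `X` is symmetric: for some `m`, `P(X ≤ m - x) = P(X ≥ m + x)` for all `x`. -/
def IsSymmetricRV (P : Measure Ω) (X : Ω → ℝ) : Prop :=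
  ∃ m : ℝ, ∀ x : ℝ, P {ω | X ω ≤ m - x} = P {ω | m + x ≤ X ω}

/-- Dispersive order `X ≤_disp Y`. -/
def DispLE (P : Measure Ω) (X Y : Ω → ℝ) : Prop :=
  ∀ u v : ℝ, 0 < v → v ≤ u → u < 1 →
    leftInv (rvCdf P X) u - leftInv (rvCdf P X) v ≤
      leftInv (rvCdf P Y) u - leftInv (rvCdf P Y) v

/-- The cdf of `X` is continuous and strictly increasing on `(F⁻¹⁺(0), F⁻¹(1))`. -/
def CdfRegular (P : Measure Ω) (X : Ω → ℝ) : Prop :=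
  ContinuousOn (rvCdf P X) (Ioo (rightInv (rvCdf P X) 0) (leftInv (rvCdf P X) 1)) ∧
  StrictMonoOn (rvCdf P X) (Ioo (rightInv (rvCdf P X) 0) (leftInv (rvCdf P X) 1))

/-- Value-at-Risk `VaR_p[X] = F_X⁻¹(p)`. -/
def VaR (P : Measure Ω) (X : Ω → ℝ) (p : ℝ) : ℝ := leftInv (rvCdf P X) p

/-- Tail-Value-at-Risk `TVaR_p[X] = (1/(1-p)) ∫_p^1 F_X⁻¹(q) dq`. -/
def TVaR (P : Measure Ω) (X : Ω → ℝ) (p : ℝ) : ℝ :=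
  (1 - p)⁻¹ * ∫ q in p..1, leftInv (rvCdf P X) q

/-- Left-Tail-Value-at-Risk `LTVaR_p[X] = (1/p) ∫_0^p F_X⁻¹(q) dq`. -/
def LTVaR (P : Measure Ω) (X : Ω → ℝ) (p : ℝ) : ℝ :=
  p⁻¹ * ∫ q in (0:ℝ)..p, leftInv (rvCdf P X) q

/-- The standard normal cdf `Φ`. -/
def stdNormCdf : ℝ → ℝ := fun x => ((gaussianReal 0 1) (Iic x)).toReal

/-- The inverse `Φ⁻¹` of the standard normal cdf. -/
def stdNormInv : ℝ → ℝ := fun p => sInf {x | p ≤ stdNormCdf x}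

/-- The Wang transform distortion function at level `p`. -/
def wangG (p : ℝ) : ℝ → ℝ := fun q => stdNormCdf (stdNormInv q + stdNormInv p)

/-- The Wang transform risk measure at level `p`. -/
def WT (P : Measure Ω) (X : Ω → ℝ) (p : ℝ) : ℝ := rho P (wangG p) X

/-- `X ~ N(μ, σ²)`. -/
def IsNormalRV (P : Measure Ω) (X : Ω → ℝ) (μ σ : ℝ) : Prop :=
  Measurable X ∧ Measure.map X P = gaussianReal μ (⟨σ ^ 2, sq_nonneg σ⟩ : NNReal)

/-- `X ~ LN(μ, σ²)`, i.e. `X` is distributed as `exp Z` with `Z ~ N(μ, σ²)`. -/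
def IsLogNormalRV (P : Measure Ω) (X : Ω → ℝ) (μ σ : ℝ) : Prop :=
  Measurable X ∧
    Measure.map X P = Measure.map Real.exp (gaussianReal μ (⟨σ ^ 2, sq_nonneg σ⟩ : NNReal))

/-- `X ~ Student(ν)`: density proportional to `(1 + x²/ν)^(-(ν+1)/2)`. -/
def IsStudentRV (P : Measure Ω) (X : Ω → ℝ) (ν : ℝ) : Prop :=
  Measurable X ∧ ∃ c : ℝ, 0 < c ∧
    Measure.map X P =
      volume.withDensity (fun x => ENNReal.ofReal (c * (1 + x ^ 2 / ν) ^ (-((ν + 1) / 2))))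

/-- Extension of a distortion function to `ℝ` by constants. -/
def gExt (g : ℝ → ℝ) : ℝ → ℝ := fun q => if q ≤ 0 then 0 else if 1 ≤ q then 1 else g q

open Classical in
/-- The Lebesgue–Stieltjes measure `dg` associated with (the right-continuous modification of)
the extension of a distortion function `g` to `ℝ`. -/
def lsMeasure (g : ℝ → ℝ) : Measure ℝ :=
  if h : Monotone (gExt g) then h.stieltjesFunction.measure else 0


/-! For `u ∈ (0,1)` the quantile of `LN(μ, σ²)` is `exp (μ + σ Φ⁻¹(u))` and
`Φ⁻¹(1 - u) = -Φ⁻¹(u)`, so `φ⁻(Φ z) = exp (μ₁ + σ₁ z) + exp (μ₂ - σ₂ z)`. The derivative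
`σ₁ e^{μ₁+σ₁z} - σ₂ e^{μ₂-σ₂z}` of this sum has the sign of `z - z₀`, where
`z₀ = (μ₂ - μ₁ + ln(σ₂/σ₁))/(σ₁ + σ₂) = Φ⁻¹(u₀)`, and `Φ⁻¹` is strictly increasing on `(0,1)`. -/

open Real

lemma stdNormCdf_eq_cdf : stdNormCdf = cdf (gaussianReal 0 1) := by
  ext x
  rw [cdf_eq_real]
  rfl

lemma stdNormCdf_eq_integral (x : ℝ) :
    stdNormCdf x = ∫ t in Iic x, gaussianPDFReal 0 1 t := by
  rw [stdNormCdf, gaussianReal_apply_eq_integral 0 one_ne_zero (Iic x), ENNReal.toReal_ofReal]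
  exact setIntegral_nonneg measurableSet_Iic fun t _ => gaussianPDFReal_nonneg 0 1 t

lemma stdNormCdf_sub (a b : ℝ) :
    stdNormCdf b - stdNormCdf a = ∫ t in a..b, gaussianPDFReal 0 1 t := by
  rw [stdNormCdf_eq_integral, stdNormCdf_eq_integral]
  exact intervalIntegral.integral_Iic_sub_Iic (integrable_gaussianPDFReal 0 1).integrableOn
    (integrable_gaussianPDFReal 0 1).integrableOn

lemma hasDerivAt_stdNormCdf (x : ℝ) : HasDerivAt stdNormCdf (gaussianPDFReal 0 1 x) x := by
  have hpdf : Continuous (gaussianPDFReal 0 1) := by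
    unfold gaussianPDFReal
    fun_prop
  have hprimitive :
      stdNormCdf = fun y => stdNormCdf 0 + ∫ t in (0 : ℝ)..y, gaussianPDFReal 0 1 t := by
    funext y
    rw [← stdNormCdf_sub]
    ring
  rw [hprimitive]
  exact (hpdf.integral_hasStrictDerivAt 0 x).hasDerivAt.const_add _

lemma stdNormCdf_strictMono : StrictMono stdNormCdf :=
  strictMono_of_hasDerivAt_pos hasDerivAt_stdNormCdf fun x => gaussianPDFReal_pos 0 1 x one_ne_zero

lemma stdNormCdf_continuous : Continuous stdNormCdf :=
  continuous_iff_continuousAt.2 fun x => (hasDerivAt_stdNormCdf x).continuousAt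

lemma range_stdNormCdf : range stdNormCdf = Ioo 0 1 := by
  ext p
  constructor
  · rintro ⟨x, rfl⟩
    have h₀ : 0 ≤ stdNormCdf (x - 1) := stdNormCdf_eq_cdf ▸ cdf_nonneg _ _
    have h₁ : stdNormCdf (x + 1) ≤ 1 := stdNormCdf_eq_cdf ▸ cdf_le_one _ _
    exact ⟨h₀.trans_lt (stdNormCdf_strictMono (by linarith)),
      (stdNormCdf_strictMono (by linarith)).trans_le h₁⟩
  · rintro ⟨hp₀, hp₁⟩
    refine mem_range_of_exists_le_of_exists_ge stdNormCdf_continuous ?_ ?_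
    · rw [stdNormCdf_eq_cdf]
      exact ((tendsto_cdf_atBot _).eventually (eventually_le_nhds hp₀)).exists
    · rw [stdNormCdf_eq_cdf]
      exact ((tendsto_cdf_atTop _).eventually (eventually_ge_nhds hp₁)).exists

lemma stdNormCdf_neg (x : ℝ) : stdNormCdf (-x) = 1 - stdNormCdf x := by
  have hupper : stdNormCdf (-x) = ∫ t in Ioi x, gaussianPDFReal 0 1 t := by
    have hpdf_neg : ∀ t, gaussianPDFReal 0 1 (-t) = gaussianPDFReal 0 1 t := by
      simp [gaussianPDFReal]
    rw [stdNormCdf_eq_integral, ← neg_neg x, ← integral_comp_neg_Iic, neg_neg]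
    simp_rw [hpdf_neg]
  have htotal : stdNormCdf x + ∫ t in Ioi x, gaussianPDFReal 0 1 t = 1 := by
    rw [stdNormCdf_eq_integral, intervalIntegral.integral_Iic_add_Ioi
      (integrable_gaussianPDFReal 0 1).integrableOn (integrable_gaussianPDFReal 0 1).integrableOn,
      integral_gaussianPDFReal_eq_one 0 one_ne_zero]
  linarith

lemma stdNormInv_stdNormCdf (x : ℝ) : stdNormInv (stdNormCdf x) = x := by
  simp_rw [stdNormInv, stdNormCdf_strictMono.le_iff_le]
  exact csInf_Ici

lemma stdNormCdf_stdNormInv {p : ℝ} (hp : p ∈ Ioo 0 1) : stdNormCdf (stdNormInv p) = p := by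
  obtain ⟨x, rfl⟩ : p ∈ range stdNormCdf := range_stdNormCdf ▸ hp
  rw [stdNormInv_stdNormCdf]

lemma stdNormInv_one_sub {p : ℝ} (hp : p ∈ Ioo 0 1) : stdNormInv (1 - p) = -stdNormInv p := by
  rw [← stdNormCdf_stdNormInv hp, ← stdNormCdf_neg, stdNormInv_stdNormCdf, stdNormInv_stdNormCdf]

lemma stdNormInv_strictMonoOn : StrictMonoOn stdNormInv (Ioo 0 1) := by
  intro p hp q hq hpq
  rwa [← stdNormCdf_strictMono.lt_iff_lt, stdNormCdf_stdNormInv hp, stdNormCdf_stdNormInv hq]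

lemma leftInv_eq_of_forall_le_iff {F : ℝ → ℝ} {p a : ℝ} (h : ∀ x, p ≤ F x ↔ a ≤ x) :
    leftInv F p = a := by
  have hset : {x | p ≤ F x} = Ici a := Set.ext h
  rw [leftInv, hset, csInf_Ici]

lemma gaussianReal_Iic_toReal {μ σ : ℝ} (hσ : 0 < σ) (y : ℝ) :
    (gaussianReal μ (⟨σ ^ 2, sq_nonneg σ⟩ : NNReal) (Iic y)).toReal = stdNormCdf ((y - μ) / σ) := by
  have hstd : (gaussianReal 0 1).map (fun z => σ * z + μ) =
      gaussianReal μ (⟨σ ^ 2, sq_nonneg σ⟩ : NNReal) := by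
    change (gaussianReal 0 1).map ((· + μ) ∘ (σ * ·)) = _
    rw [← Measure.map_map (measurable_add_const μ) (measurable_const_mul σ),
      gaussianReal_map_const_mul, gaussianReal_map_add_const]
    congr 1
    · ring
    · ext
      simp only [mul_one]
      rfl
  have hpre : (fun z => σ * z + μ) ⁻¹' Iic y = Iic ((y - μ) / σ) := by
    ext z
    simp only [mem_preimage, mem_Iic, le_div_iff₀ hσ]
    constructor <;> intro <;> linarith
  rw [← hstd, Measure.map_apply (by fun_prop) measurableSet_Iic, hpre]
  rfl

lemma rvCdf_of_isLogNormalRV {P : Measure Ω} {X : Ω → ℝ} {μ σ : ℝ} (hσ : 0 < σ)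
    (h : IsLogNormalRV P X μ σ) (x : ℝ) :
    rvCdf P X x = if 0 < x then stdNormCdf ((log x - μ) / σ) else 0 := by
  have hmap : rvCdf P X x = (P.map X (Iic x)).toReal := by
    rw [Measure.map_apply h.1 measurableSet_Iic]
    rfl
  rw [hmap, h.2, Measure.map_apply measurable_exp measurableSet_Iic]
  split_ifs with hx
  · have hpre : exp ⁻¹' Iic x = Iic (log x) := by
      ext z
      exact (le_log_iff_exp_le hx).symm
    rw [hpre, gaussianReal_Iic_toReal hσ]
  · have hpre : exp ⁻¹' Iic x = ∅ :=
      eq_empty_of_forall_notMem fun z hz => hx ((exp_pos z).trans_le hz)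
    simp [hpre]

lemma leftInv_rvCdf_of_isLogNormalRV {P : Measure Ω} {X : Ω → ℝ} {μ σ : ℝ} (hσ : 0 < σ)
    (h : IsLogNormalRV P X μ σ) {u : ℝ} (hu : u ∈ Ioo 0 1) :
    leftInv (rvCdf P X) u = exp (μ + σ * stdNormInv u) := by
  refine leftInv_eq_of_forall_le_iff fun x => ?_
  rw [rvCdf_of_isLogNormalRV hσ h]
  split_ifs with hx
  · rw [← le_log_iff_exp_le hx, ← stdNormCdf_stdNormInv hu, stdNormCdf_strictMono.le_iff_le,
      stdNormInv_stdNormCdf, le_div_iff₀ hσ]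
    constructor <;> intro <;> linarith
  · exact iff_of_false (by linarith [hu.1]) fun hle => hx ((exp_pos _).trans_le hle)

/-- The aggregate loss function of `LN(μ₁, σ₁²)` and `LN(μ₂, σ₂²)` read on the normal scale:
`φ⁻(Φ z) = normalScaleLoss μ₁ σ₁ μ₂ σ₂ z`. -/
def normalScaleLoss (μ₁ σ₁ μ₂ σ₂ z : ℝ) : ℝ := exp (μ₁ + σ₁ * z) + exp (μ₂ - σ₂ * z)

def normalScaleArgmin (μ₁ σ₁ μ₂ σ₂ : ℝ) : ℝ := (μ₂ - μ₁ + log (σ₂ / σ₁)) / (σ₁ + σ₂)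

section NormalScaleLoss

variable {μ₁ μ₂ σ₁ σ₂ : ℝ}

lemma hasDerivAt_normalScaleLoss (z : ℝ) :
    HasDerivAt (normalScaleLoss μ₁ σ₁ μ₂ σ₂)
      (σ₁ * exp (μ₁ + σ₁ * z) - σ₂ * exp (μ₂ - σ₂ * z)) z := by
  have h₁ := ((hasDerivAt_id z).const_mul σ₁ |>.const_add μ₁).exp
  have h₂ := ((hasDerivAt_id z).const_mul σ₂ |>.const_sub μ₂).exp
  exact (h₁.add h₂).congr_deriv (by simp only [id]; ring)

lemma normalScaleLoss_deriv_eq (hσ₁ : 0 < σ₁) (hσ₂ : 0 < σ₂) (z : ℝ) :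
    σ₁ * exp (μ₁ + σ₁ * z) - σ₂ * exp (μ₂ - σ₂ * z) =
      σ₂ * exp (μ₂ - σ₂ * z) *
        (exp ((σ₁ + σ₂) * (z - normalScaleArgmin μ₁ σ₁ μ₂ σ₂)) - 1) := by
  have hexp : (σ₁ + σ₂) * (z - normalScaleArgmin μ₁ σ₁ μ₂ σ₂) =
      (μ₁ + σ₁ * z) - (μ₂ - σ₂ * z) - log (σ₂ / σ₁) := by
    rw [normalScaleArgmin]
    field_simp
    ring
  rw [hexp, exp_sub _ (log _), exp_sub (μ₁ + σ₁ * z), exp_log (div_pos hσ₂ hσ₁)]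
  have hB := exp_pos (μ₂ - σ₂ * z)
  generalize exp (μ₁ + σ₁ * z) = A at *
  generalize exp (μ₂ - σ₂ * z) = B at *
  field_simp

lemma strictAntiOn_normalScaleLoss (hσ₁ : 0 < σ₁) (hσ₂ : 0 < σ₂) :
    StrictAntiOn (normalScaleLoss μ₁ σ₁ μ₂ σ₂) (Iic (normalScaleArgmin μ₁ σ₁ μ₂ σ₂)) := by
  refine strictAntiOn_of_hasDerivWithinAt_neg (convex_Iic _)
    (fun z _ => (hasDerivAt_normalScaleLoss z).continuousAt.continuousWithinAt)
    (fun z _ => (hasDerivAt_normalScaleLoss z).hasDerivWithinAt) fun z hz => ?_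
  rw [interior_Iic, mem_Iio] at hz
  rw [normalScaleLoss_deriv_eq hσ₁ hσ₂]
  refine mul_neg_of_pos_of_neg (by positivity) (sub_neg.2 (exp_lt_one_iff.2 ?_))
  exact mul_neg_of_pos_of_neg (by positivity) (sub_neg.2 hz)

lemma strictMonoOn_normalScaleLoss (hσ₁ : 0 < σ₁) (hσ₂ : 0 < σ₂) :
    StrictMonoOn (normalScaleLoss μ₁ σ₁ μ₂ σ₂) (Ici (normalScaleArgmin μ₁ σ₁ μ₂ σ₂)) := by
  refine strictMonoOn_of_hasDerivWithinAt_pos (convex_Ici _)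
    (fun z _ => (hasDerivAt_normalScaleLoss z).continuousAt.continuousWithinAt)
    (fun z _ => (hasDerivAt_normalScaleLoss z).hasDerivWithinAt) fun z hz => ?_
  rw [interior_Ici, mem_Ioi] at hz
  rw [normalScaleLoss_deriv_eq hσ₁ hσ₂]
  refine mul_pos (by positivity) (sub_pos.2 (one_lt_exp_iff.2 ?_))
  exact mul_pos (by positivity) (sub_pos.2 hz)

lemma normalScaleLoss_argmin_le (hσ₁ : 0 < σ₁) (hσ₂ : 0 < σ₂) (z : ℝ) :
    normalScaleLoss μ₁ σ₁ μ₂ σ₂ (normalScaleArgmin μ₁ σ₁ μ₂ σ₂) ≤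
      normalScaleLoss μ₁ σ₁ μ₂ σ₂ z := by
  rcases le_total z (normalScaleArgmin μ₁ σ₁ μ₂ σ₂) with hz | hz
  · exact (strictAntiOn_normalScaleLoss hσ₁ hσ₂).antitoneOn hz self_mem_Iic hz
  · exact (strictMonoOn_normalScaleLoss hσ₁ hσ₂).monotoneOn self_mem_Ici hz hz

end NormalScaleLoss

theorem lognormal_nonid_aggregate_loss_shape_general
    (P : Measure Ω)
    (X₁ X₂ : Ω → ℝ) (μ₁ μ₂ σ₁ σ₂ : ℝ) (hσ₁ : 0 < σ₁) (hσ₂ : 0 < σ₂)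
    (h₁ : IsLogNormalRV P X₁ μ₁ σ₁) (h₂ : IsLogNormalRV P X₂ μ₂ σ₂)
    (φ : ℝ → ℝ)
    (hφ : ∀ u, φ u = leftInv (rvCdf P X₁) u + leftInv (rvCdf P X₂) (1 - u))
    (u₀ : ℝ) (hu₀ : u₀ = stdNormCdf ((μ₂ - μ₁ + Real.log (σ₂ / σ₁)) / (σ₁ + σ₂))) :
    u₀ ∈ Ioo (0:ℝ) 1 ∧
    StrictAntiOn φ (Ioo 0 u₀) ∧
    StrictMonoOn φ (Ioo u₀ 1) ∧
    (∀ u ∈ Ioo (0:ℝ) 1, φ u₀ ≤ φ u) := by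
  set ψ := normalScaleLoss μ₁ σ₁ μ₂ σ₂
  have hu₀_mem : u₀ ∈ Ioo (0 : ℝ) 1 := hu₀ ▸ range_stdNormCdf ▸ mem_range_self _
  have hz₀ : stdNormInv u₀ = normalScaleArgmin μ₁ σ₁ μ₂ σ₂ := hu₀ ▸ stdNormInv_stdNormCdf _
  have hφψ : EqOn (ψ ∘ stdNormInv) φ (Ioo 0 1) := fun u hu => by
    have hu' : 1 - u ∈ Ioo (0 : ℝ) 1 := ⟨by linarith [hu.2], by linarith [hu.1]⟩
    rw [hφ, leftInv_rvCdf_of_isLogNormalRV hσ₁ h₁ hu, leftInv_rvCdf_of_isLogNormalRV hσ₂ h₂ hu',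
      stdNormInv_one_sub hu, mul_neg, ← sub_eq_add_neg]
    rfl
  refine ⟨hu₀_mem, ?_, ?_, fun u hu => ?_⟩
  · have hsub : Ioo 0 u₀ ⊆ Ioo 0 1 := Ioo_subset_Ioo_right hu₀_mem.2.le
    refine ((strictAntiOn_normalScaleLoss hσ₁ hσ₂).comp_strictMonoOn
      (stdNormInv_strictMonoOn.mono hsub) fun u hu => ?_).congr (hφψ.mono hsub)
    exact hz₀ ▸ (stdNormInv_strictMonoOn (hsub hu) hu₀_mem hu.2).le
  · have hsub : Ioo u₀ 1 ⊆ Ioo 0 1 := Ioo_subset_Ioo_left hu₀_mem.1.le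
    refine ((strictMonoOn_normalScaleLoss hσ₁ hσ₂).comp
      (stdNormInv_strictMonoOn.mono hsub) fun u hu => ?_).congr (hφψ.mono hsub)
    exact hz₀ ▸ (stdNormInv_strictMonoOn hu₀_mem (hsub hu) hu.1).le
  · rw [← hφψ hu, ← hφψ hu₀_mem, Function.comp_apply, Function.comp_apply, hz₀]
    exact normalScaleLoss_argmin_le hσ₁ hσ₂ _

/-- the aggregate loss function of two non-identically distributed
log-normal risks is U-shaped with minimum at `Φ((μ₂ - μ₁ + ln(σ₂/σ₁))/(σ₁ + σ₂))`. -/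
theorem lognormal_nonid_aggregate_loss_shape
    (P : Measure Ω) [IsProbabilityMeasure P]
    (X₁ X₂ : Ω → ℝ) (μ₁ μ₂ σ₁ σ₂ : ℝ) (hσ₁ : 0 < σ₁) (hσ₂ : 0 < σ₂)
    (h₁ : IsLogNormalRV P X₁ μ₁ σ₁) (h₂ : IsLogNormalRV P X₂ μ₂ σ₂)
    (hne : (μ₁, σ₁) ≠ (μ₂, σ₂))
    (φ : ℝ → ℝ)
    (hφ : ∀ u, φ u = leftInv (rvCdf P X₁) u + leftInv (rvCdf P X₂) (1 - u))
    (u₀ : ℝ) (hu₀ : u₀ = stdNormCdf ((μ₂ - μ₁ + Real.log (σ₂ / σ₁)) / (σ₁ + σ₂))) :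
    u₀ ∈ Ioo (0:ℝ) 1 ∧
    StrictAntiOn φ (Ioo 0 u₀) ∧
    StrictMonoOn φ (Ioo u₀ 1) ∧
    (∀ u ∈ Ioo (0:ℝ) 1, φ u₀ ≤ φ u) :=
  lognormal_nonid_aggregate_loss_shape_general P X₁ X₂ μ₁ μ₂ σ₁ σ₂ hσ₁ hσ₂ h₁ h₂ φ hφ u₀ hu₀

end
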